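/- Fix e > 0, T > 0, μ ∈ ℝ, and for b > 0 let e_{n,b} = b(n + 1/2), p(b,T,μ) = (bT/(2π)) Σ_{n=0}^{∞} ln(1 + e^{−(e_{n,b} − μ)/T}), m_circ(b,T,μ) = e (b/(2π)) Σ_{n=0}^{∞} (n + 1/2) (e^{(e_{n,b} − μ)/T} + 1)^{−1}, and m_res(b,T,μ) = −e p(b,T,μ)/b. Then b ↦ p(b,T,μ) is differentiable on (0,∞) and the bulk magnetization m(b,T,μ) := −e ∂_b p(b,T,μ) satisfies m(b,T,μ) = m_circ(b,T,μ) + m_res(b,T,μ). -/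
import Mathlib

open Real

noncomputable section

/-- The Landau grand-canonical pressure
`p(b,T,μ) = (bT/(2π)) Σ_n ln(1 + e^{−(b(n+1/2)−μ)/T})`. -/
def landauPressure (b T μ : ℝ) : ℝ :=
  b * T / (2 * Real.pi) * ∑' n : ℕ, Real.log (1 + Real.exp (-(b * (n + 1 / 2) - μ) / T))

/-- The circulating magnetization
`m_circ(b,T,μ) = e (b/(2π)) Σ_n (n + 1/2)(e^{(b(n+1/2)−μ)/T} + 1)^{−1}`. -/
def landauMcirc (e b T μ : ℝ) : ℝ :=
  e * (b / (2 * Real.pi)) * ∑' n : ℕ, ((n : ℝ) + 1 / 2) * (Real.exp ((b * (n + 1 / 2) - μ) / T) + 1)⁻¹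

/-- The residual magnetization `m_res(b,T,μ) = −e p(b,T,μ)/b`. -/
def landauMres (e b T μ : ℝ) : ℝ := -e * landauPressure b T μ / b

/-- Term of the pressure series. -/
def lgTerm (T μ : ℝ) (n : ℕ) (x : ℝ) : ℝ :=
  Real.log (1 + Real.exp (-(x * (n + 1 / 2) - μ) / T))

/-- Derivative (in the field variable) of `lgTerm`. -/
def lgTerm' (T μ : ℝ) (n : ℕ) (x : ℝ) : ℝ :=
  Real.exp (-(x * (n + 1 / 2) - μ) / T) * (-((n : ℝ) + 1 / 2) / T) /
    (1 + Real.exp (-(x * (n + 1 / 2) - μ) / T))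

lemma lgTerm_hasDerivAt (T μ : ℝ) (hT : 0 < T) (n : ℕ) (y : ℝ) :
    HasDerivAt (lgTerm T μ n) (lgTerm' T μ n y) y := by
  have h1 : HasDerivAt (fun x : ℝ => -(x * ((n : ℝ) + 1 / 2) - μ) / T)
      (-((n : ℝ) + 1 / 2) / T) y := by
    have h := (((hasDerivAt_id y).mul_const ((n : ℝ) + 1 / 2)).sub_const μ).neg.div_const T
    simpa using h
  have h3 := (h1.exp.const_add 1)
  have h4 := h3.log (by positivity)
  exact h4

/-- Monotone bound for the exponentials. -/
lemma exp_term_le (T μ : ℝ) (hT : 0 < T) (n : ℕ) {c y : ℝ} (hy : c ≤ y) :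
    Real.exp (-(y * ((n : ℝ) + 1 / 2) - μ) / T) ≤
      Real.exp (-(c * ((n : ℝ) + 1 / 2) - μ) / T) := by
  apply Real.exp_le_exp.2
  have hlam : (0 : ℝ) ≤ (n : ℝ) + 1 / 2 := by positivity
  have h := mul_le_mul_of_nonneg_right hy hlam
  apply (div_le_div_iff_of_pos_right hT).mpr
  linarith

lemma exp_term_eq (T μ : ℝ) (hT : 0 < T) (c : ℝ) (n : ℕ) :
    Real.exp (-(c * ((n : ℝ) + 1 / 2) - μ) / T)
      = Real.exp ((μ - c / 2) / T) * Real.exp (-(c / T)) ^ n := by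
  rw [← Real.exp_nat_mul, ← Real.exp_add]
  congr 1
  field_simp
  ring

lemma summable_exp_term (T μ : ℝ) (hT : 0 < T) {c : ℝ} (hc : 0 < c) :
    Summable (fun n : ℕ => Real.exp (-(c * ((n : ℝ) + 1 / 2) - μ) / T)) := by
  have hr : Real.exp (-(c / T)) < 1 := by
    rw [Real.exp_lt_one_iff]
    have : 0 < c / T := by positivity
    linarith
  have h2 : Summable (fun n : ℕ => Real.exp (-(c / T)) ^ n) :=
    summable_geometric_of_lt_one (Real.exp_pos _).le hr
  refine (h2.mul_left (Real.exp ((μ - c / 2) / T))).congr fun n => ?_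
  rw [exp_term_eq T μ hT c n]

lemma summable_bound (T μ : ℝ) (hT : 0 < T) {c : ℝ} (hc : 0 < c) :
    Summable (fun n : ℕ => ((n : ℝ) + 1) / T * Real.exp (-(c * ((n : ℝ) + 1 / 2) - μ) / T)) := by
  have hr : Real.exp (-(c / T)) < 1 := by
    rw [Real.exp_lt_one_iff]
    have : 0 < c / T := by positivity
    linarith
  have hr' : ‖Real.exp (-(c / T))‖ < 1 := by
    rwa [Real.norm_eq_abs, abs_of_pos (Real.exp_pos _)]
  have h1 : Summable (fun n : ℕ => ((n : ℝ)) ^ 1 * Real.exp (-(c / T)) ^ n) :=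
    summable_pow_mul_geometric_of_norm_lt_one 1 hr'
  have h2 : Summable (fun n : ℕ => Real.exp (-(c / T)) ^ n) :=
    summable_geometric_of_lt_one (Real.exp_pos _).le hr
  refine ((h1.add h2).mul_left (Real.exp ((μ - c / 2) / T) / T)).congr fun n => ?_
  rw [exp_term_eq T μ hT c n]
  ring

/-- The series of `lgTerm` has derivative given by the series of `lgTerm'`. -/
lemma landau_series_hasDerivAt (T μ : ℝ) (hT : 0 < T) {b : ℝ} (hb : 0 < b) :
    HasDerivAt (fun x : ℝ => ∑' n : ℕ, lgTerm T μ n x) (∑' n : ℕ, lgTerm' T μ n b) b := by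
  set c : ℝ := b / 2 with hc_def
  have hc : 0 < c := by positivity
  have hcb : c < b := by rw [hc_def]; linarith
  have hu : Summable (fun n : ℕ =>
      ((n : ℝ) + 1) / T * Real.exp (-(c * ((n : ℝ) + 1 / 2) - μ) / T)) :=
    summable_bound T μ hT hc
  -- derivative bound
  have hg' : ∀ (n : ℕ), ∀ y ∈ Set.Ioi c, ‖lgTerm' T μ n y‖ ≤
      ((n : ℝ) + 1) / T * Real.exp (-(c * ((n : ℝ) + 1 / 2) - μ) / T) := by
    intro n y hy
    rw [Set.mem_Ioi] at hy
    set E : ℝ := Real.exp (-(y * ((n : ℝ) + 1 / 2) - μ) / T) with hE_def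
    have hE : 0 < E := Real.exp_pos _
    have habs : ‖lgTerm' T μ n y‖ = E * (((n : ℝ) + 1 / 2) / T) / (1 + E) := by
      rw [Real.norm_eq_abs, lgTerm', ← hE_def, abs_div, abs_mul,
        abs_of_pos (by positivity : (0:ℝ) < 1 + E), abs_div,
        abs_neg, abs_of_pos (by positivity : (0:ℝ) < (n : ℝ) + 1 / 2), abs_of_pos hT,
        abs_of_pos hE]
    rw [habs]
    have h1 : E * (((n : ℝ) + 1 / 2) / T) / (1 + E) ≤ E * (((n : ℝ) + 1 / 2) / T) :=
      div_le_self (by positivity) (by linarith)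
    have h2 : E ≤ Real.exp (-(c * ((n : ℝ) + 1 / 2) - μ) / T) :=
      exp_term_le T μ hT n hy.le
    have h3 : ((n : ℝ) + 1 / 2) / T ≤ ((n : ℝ) + 1) / T :=
      (div_le_div_iff_of_pos_right hT).mpr (by linarith)
    calc E * (((n : ℝ) + 1 / 2) / T) / (1 + E)
        ≤ E * (((n : ℝ) + 1 / 2) / T) := h1
      _ ≤ Real.exp (-(c * ((n : ℝ) + 1 / 2) - μ) / T) * (((n : ℝ) + 1) / T) :=
          mul_le_mul h2 h3 (by positivity) (Real.exp_pos _).le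
      _ = ((n : ℝ) + 1) / T * Real.exp (-(c * ((n : ℝ) + 1 / 2) - μ) / T) := by ring
  -- summability at the point b
  have hg0 : Summable (fun n : ℕ => lgTerm T μ n b) := by
    refine Summable.of_nonneg_of_le (fun n => ?_) (fun n => ?_) (summable_exp_term T μ hT hc)
    · exact Real.log_nonneg (by linarith [Real.exp_pos (-(b * ((n : ℝ) + 1 / 2) - μ) / T)])
    · have hE : (0:ℝ) < Real.exp (-(b * ((n : ℝ) + 1 / 2) - μ) / T) := Real.exp_pos _
      have h1 : lgTerm T μ n b ≤ Real.exp (-(b * ((n : ℝ) + 1 / 2) - μ) / T) := by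
        have := Real.log_le_sub_one_of_pos
          (show (0:ℝ) < 1 + Real.exp (-(b * ((n : ℝ) + 1 / 2) - μ) / T) by linarith)
        simpa [lgTerm] using this
      exact h1.trans (exp_term_le T μ hT n hcb.le)
  exact hasDerivAt_tsum_of_isPreconnected hu isOpen_Ioi (convex_Ioi c).isPreconnected
    (fun n y _ => lgTerm_hasDerivAt T μ hT n y) hg' (Set.mem_Ioi.mpr hcb) hg0
    (Set.mem_Ioi.mpr hcb)

/-- **Splitting of the Landau bulk magnetization.**
For `e, T > 0` and `μ ∈ ℝ`, the pressure `b ↦ p(b,T,μ)` is differentiable on `(0,∞)` and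
the magnetization `m = −e ∂_b p` splits as `m = m_circ + m_res`. -/
theorem landau_magnetization_splitting (e T μ : ℝ) (he : 0 < e) (hT : 0 < T) :
    ∀ b ∈ Set.Ioi (0 : ℝ),
      DifferentiableAt ℝ (fun b' : ℝ => landauPressure b' T μ) b ∧
      -e * deriv (fun b' : ℝ => landauPressure b' T μ) b
        = landauMcirc e b T μ + landauMres e b T μ := by
  intro b hb
  rw [Set.mem_Ioi] at hb
  have hπ : (0 : ℝ) < Real.pi := Real.pi_pos
  have hS := landau_series_hasDerivAt T μ hT hb
  have hfun : (fun b' : ℝ => landauPressure b' T μ)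
      = fun x : ℝ => x * T / (2 * Real.pi) * ∑' n : ℕ, lgTerm T μ n x := by
    funext x
    rfl
  have hlin : HasDerivAt (fun x : ℝ => x * T / (2 * Real.pi)) (T / (2 * Real.pi)) b := by
    have h := ((hasDerivAt_id b).mul_const T).div_const (2 * Real.pi)
    simpa using h
  have hp : HasDerivAt (fun b' : ℝ => landauPressure b' T μ)
      (T / (2 * Real.pi) * (∑' n : ℕ, lgTerm T μ n b)
        + b * T / (2 * Real.pi) * (∑' n : ℕ, lgTerm' T μ n b)) b := by
    rw [hfun]
    exact hlin.mul hS
  refine ⟨hp.differentiableAt, ?_⟩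
  rw [hp.deriv]
  -- residual part
  have hres : landauMres e b T μ = -e * (T / (2 * Real.pi) * ∑' n : ℕ, lgTerm T μ n b) := by
    rw [landauMres, landauPressure]
    have : (∑' n : ℕ, Real.log (1 + Real.exp (-(b * ((n : ℕ) + 1 / 2) - μ) / T)))
        = ∑' n : ℕ, lgTerm T μ n b := rfl
    rw [this]
    field_simp
  -- circulating part
  have hcirc : landauMcirc e b T μ
      = -e * (b * T / (2 * Real.pi) * ∑' n : ℕ, lgTerm' T μ n b) := by
    rw [landauMcirc, ← tsum_mul_left]
    have hrhs : -e * (b * T / (2 * Real.pi) * ∑' n : ℕ, lgTerm' T μ n b)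
        = ∑' n : ℕ, (-e * (b * T / (2 * Real.pi))) * lgTerm' T μ n b := by
      rw [tsum_mul_left]; ring
    rw [hrhs]
    refine tsum_congr fun n => ?_
    have hflip : Real.exp ((b * ((n : ℝ) + 1 / 2) - μ) / T)
        = (Real.exp (-(b * ((n : ℝ) + 1 / 2) - μ) / T))⁻¹ := by
      rw [show (b * ((n : ℝ) + 1 / 2) - μ) / T = -(-(b * ((n : ℝ) + 1 / 2) - μ) / T) by ring,
        Real.exp_neg]
    rw [lgTerm', hflip]
    set E : ℝ := Real.exp (-(b * ((n : ℝ) + 1 / 2) - μ) / T) with hE_def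
    have hE : 0 < E := Real.exp_pos _
    have hE1 : (0:ℝ) < 1 + E := by linarith
    have hEinv : (0:ℝ) < E⁻¹ + 1 := by positivity
    have hTne : T ≠ 0 := hT.ne'
    have hπne : Real.pi ≠ 0 := hπ.ne'
    field_simp
  rw [hcirc, hres]
  ring

end
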